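/- arXiv:0905.1659 — 2 statements merged into one kernel-verified Lean document; each statement's English description precedes it below -/
import Mathlib

section
/- Let (X, 𝔅, μ) be a finite measure space and let f : X → ℂ be square-integrable with respect to μ. Let ν = μ·|f|² be the measure with density |f|² with respect to μ. Then there exists a complex linear isometry J from L²(ν) into L²(μ) such that for every bounded measurable function φ : X → ℂ, J sends the class of φ in L²(ν) to the class of φ·f in L²(μ); moreover the range of J is the closure in L²(μ) of the set of classes of products φ·f with φ bounded and measurable. -/
open scoped ENNReal NNReal

open MeasureTheory

/-!
Pointwise `|u f|² = |u|² |f|²`, so `∫ |u f|² dμ = ∫ |u|² d(|f|² μ)` and multiplication by `f`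
is an isometry `L²(|f|² μ) → L²(μ)`; it is well defined on classes because a `|f|² μ`-null
set lies, up to a `μ`-null set, in the zero set of `f`. Its range is closed. Simple functions
are dense in `L²(|f|² μ)` and are sent to products `φ f` with `φ` bounded, while conversely
any measurable `φ` with `φ f ∈ L²(μ)` lies in `L²(|f|² μ)` by the same norm identity.
-/

namespace MeasureTheory

variable {X 𝕜 : Type*} [MeasurableSpace X] [RCLike 𝕜] {μ : Measure X} {f : X → 𝕜}

local notation "ν" => μ.withDensity fun x => (‖f x‖₊ : ℝ≥0∞) ^ 2

theorem aemeasurable_nnnorm_sq (hf : AEStronglyMeasurable f μ) :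
    AEMeasurable (fun x => (‖f x‖₊ : ℝ≥0∞) ^ 2) μ :=
  hf.enorm.pow_const 2

theorem mul_ae_eq_of_ae_eq_withDensity (hf : AEStronglyMeasurable f μ) {u v : X → 𝕜}
    (h : u =ᵐ[ν] v) : (fun x => u x * f x) =ᵐ[μ] fun x => v x * f x := by
  rw [Filter.EventuallyEq, ae_withDensity_iff' (aemeasurable_nnnorm_sq hf)] at h
  filter_upwards [h] with x hx
  by_cases hfx : f x = 0
  · simp [hfx]
  · rw [hx (by simpa using hfx)]

theorem eLpNorm_mul_eq_eLpNorm_withDensity (hf : AEStronglyMeasurable f μ) {u : X → 𝕜}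
    (hu : AEStronglyMeasurable u ν) : eLpNorm (fun x => u x * f x) 2 μ = eLpNorm u 2 ν := by
  simp only [eLpNorm_eq_lintegral_rpow_enorm_toReal two_ne_zero ENNReal.ofNat_ne_top,
    ENNReal.toReal_ofNat, ENNReal.rpow_two, enorm_mul, mul_pow]
  rw [lintegral_withDensity_eq_lintegral_mul₀' (aemeasurable_nnnorm_sq hf) (hu.enorm.pow_const 2)]
  simp only [Pi.mul_apply, mul_comm, enorm_eq_nnnorm]

theorem memLp_withDensity_iff_memLp_mul (hf : AEStronglyMeasurable f μ) {u : X → 𝕜}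
    (hu : AEStronglyMeasurable u ν) : MemLp u 2 ν ↔ MemLp (fun x => u x * f x) 2 μ := by
  have hmul : AEStronglyMeasurable (fun x => u x * f x) μ :=
    (hu.stronglyMeasurable_mk.aestronglyMeasurable.mul hf).congr
      (mul_ae_eq_of_ae_eq_withDensity hf hu.ae_eq_mk).symm
  simp only [MemLp, hu, hmul, true_and, eLpNorm_mul_eq_eLpNorm_withDensity hf hu]

theorem memLp_coeFn_mul (hf : AEStronglyMeasurable f μ) (g : Lp 𝕜 2 ν) :
    MemLp (fun x => g x * f x) 2 μ :=
  (memLp_withDensity_iff_memLp_mul hf (Lp.aestronglyMeasurable g)).1 (Lp.memLp g)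

noncomputable def mulLpWithDensity (hf : AEStronglyMeasurable f μ) :
    Lp 𝕜 2 ν →ₗᵢ[𝕜] Lp 𝕜 2 μ where
  toFun g := (memLp_coeFn_mul hf g).toLp _
  map_add' g h := by
    rw [← MemLp.toLp_add]
    refine MemLp.toLp_congr _ _ ?_
    filter_upwards [mul_ae_eq_of_ae_eq_withDensity hf (Lp.coeFn_add g h)] with x hx
    simpa [add_mul] using hx
  map_smul' c g := by
    rw [RingHom.id_apply, ← MemLp.toLp_const_smul]
    refine MemLp.toLp_congr _ _ ?_
    filter_upwards [mul_ae_eq_of_ae_eq_withDensity hf (Lp.coeFn_smul c g)] with x hx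
    simpa [mul_assoc] using hx
  norm_map' g := by
    change ‖(memLp_coeFn_mul hf g).toLp _‖ = ‖g‖
    rw [Lp.norm_toLp, Lp.norm_def,
      eLpNorm_mul_eq_eLpNorm_withDensity hf (Lp.aestronglyMeasurable g)]

theorem mulLpWithDensity_toLp (hf : AEStronglyMeasurable f μ) {u : X → 𝕜} (h₁ : MemLp u 2 ν)
    (h₂ : MemLp (fun x => u x * f x) 2 μ) : mulLpWithDensity hf (h₁.toLp u) = h₂.toLp _ :=
  MemLp.toLp_congr (memLp_coeFn_mul hf _) h₂ (mul_ae_eq_of_ae_eq_withDensity hf h₁.coeFn_toLp)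

theorem range_mulLpWithDensity (hf : AEStronglyMeasurable f μ) :
    Set.range (mulLpWithDensity hf) = closure {g : Lp 𝕜 2 μ |
      ∃ (φ : X → 𝕜) (_ : Measurable φ) (_ : ∃ C : ℝ, ∀ x, ‖φ x‖ ≤ C)
        (h₂ : MemLp (fun x => φ x * f x) 2 μ), g = h₂.toLp fun x => φ x * f x} := by
  set J := mulLpWithDensity hf
  apply subset_antisymm
  · rintro _ ⟨g, rfl⟩
    refine (Lp.simpleFunc.denseRange (p := 2) ENNReal.ofNat_ne_top).induction_on g
      (isClosed_closure.preimage J.continuous) fun s => subset_closure ?_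
    set ψ := Lp.simpleFunc.toSimpleFunc s
    have h₁ : MemLp ψ 2 ν := Lp.simpleFunc.memLp s
    have hs : (s : Lp 𝕜 2 ν) = h₁.toLp ψ :=
      congrArg Subtype.val (Lp.simpleFunc.toLp_toSimpleFunc s).symm
    have h₂ := (memLp_withDensity_iff_memLp_mul hf ψ.stronglyMeasurable.aestronglyMeasurable).1 h₁
    exact ⟨ψ, ψ.measurable, ψ.exists_forall_norm_le, h₂, by rw [hs, mulLpWithDensity_toLp]⟩
  · refine closure_minimal ?_ J.isometry.isClosedEmbedding.isClosed_range
    rintro _ ⟨φ, hφ, -, h₂, rfl⟩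
    have h₁ := (memLp_withDensity_iff_memLp_mul hf hφ.aestronglyMeasurable).2 h₂
    exact ⟨h₁.toLp φ, mulLpWithDensity_toLp hf h₁ h₂⟩

end MeasureTheory

theorem stmt2_general {X : Type*} [MeasurableSpace X] (μ : Measure X)
    (f : X → ℂ) (hf : MemLp f 2 μ) :
    ∃ J : Lp ℂ 2 (μ.withDensity fun x => (‖f x‖₊ : ℝ≥0∞) ^ 2) →ₗᵢ[ℂ] Lp ℂ 2 μ,
      (∀ (φ : X → ℂ), Measurable φ → (∃ C : ℝ, ∀ x, ‖φ x‖ ≤ C) →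
        ∀ (h₁ : MemLp φ 2 (μ.withDensity fun x => (‖f x‖₊ : ℝ≥0∞) ^ 2))
          (h₂ : MemLp (fun x => φ x * f x) 2 μ),
          J (h₁.toLp φ) = h₂.toLp fun x => φ x * f x) ∧
      Set.range J = closure {g : Lp ℂ 2 μ |
        ∃ (φ : X → ℂ) (_ : Measurable φ) (_ : ∃ C : ℝ, ∀ x, ‖φ x‖ ≤ C)
          (h₂ : MemLp (fun x => φ x * f x) 2 μ),
          g = h₂.toLp fun x => φ x * f x} :=
  ⟨mulLpWithDensity hf.1, fun _ _ _ => mulLpWithDensity_toLp hf.1, range_mulLpWithDensity hf.1⟩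

/-- Let `(X, 𝔅, μ)` be a finite measure space and `f ∈ L²(μ)`, and let
`ν = μ·|f|²`. Then there is a complex linear isometry `J : L²(ν) → L²(μ)` sending the class
of any bounded measurable `φ` to the class of `φ·f`, whose range is the closure of the set
of classes of such products `φ·f`. -/
theorem stmt2 {X : Type*} [MeasurableSpace X] (μ : Measure X) [IsFiniteMeasure μ]
    (f : X → ℂ) (hf : MemLp f 2 μ) :
    ∃ J : Lp ℂ 2 (μ.withDensity fun x => (‖f x‖₊ : ℝ≥0∞) ^ 2) →ₗᵢ[ℂ] Lp ℂ 2 μ,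
      (∀ (φ : X → ℂ), Measurable φ → (∃ C : ℝ, ∀ x, ‖φ x‖ ≤ C) →
        ∀ (h₁ : MemLp φ 2 (μ.withDensity fun x => (‖f x‖₊ : ℝ≥0∞) ^ 2))
          (h₂ : MemLp (fun x => φ x * f x) 2 μ),
          J (h₁.toLp φ) = h₂.toLp fun x => φ x * f x) ∧
      Set.range J = closure {g : Lp ℂ 2 μ |
        ∃ (φ : X → ℂ) (_ : Measurable φ) (_ : ∃ C : ℝ, ∀ x, ‖φ x‖ ≤ C)
          (h₂ : MemLp (fun x => φ x * f x) 2 μ),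
          g = h₂.toLp fun x => φ x * f x} :=
  stmt2_general μ f hf
end

section
/- Let (X, 𝔅, μ) be a finite measure space, let f₁, …, fₙ : X → ℂ be square-integrable with respect to μ, and set g(x) = Σᵢ₌₁ⁿ |fᵢ(x)|². Let ν = μ·g be the measure with density g with respect to μ. Then there exists a complex linear isometry J from L²(ν) into the ℓ²-direct sum L²(μ)ⁿ = L²(μ) ⊕ ⋯ ⊕ L²(μ) such that for every bounded measurable function φ : X → ℂ, J sends the class of φ in L²(ν) to the n-tuple (φ·f₁, …, φ·fₙ). -/
open scoped ENNReal NNReal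

open MeasureTheory

/-!
Write `g = ∑ᵢ ‖fᵢ‖²` and `ν = μ·g`. For `h ∈ L²(ν)`,
`∫ ‖h‖² dν = ∫ g ‖h‖² dμ = ∑ᵢ ∫ ‖h fᵢ‖² dμ`, so `h ↦ (h f₁, …, h fₙ)` is norm-preserving into the
`ℓ²`-sum of copies of `L²(μ)`. It is well defined on classes because each `fᵢ` vanishes where `g`
does, which is exactly the set that `ν` ignores.
-/

namespace MeasureTheory

theorem eLpNorm_two_pow_two {α ε : Type*} [MeasurableSpace α] [ENorm ε]
    {μ : Measure α} (f : α → ε) : eLpNorm f 2 μ ^ 2 = ∫⁻ x, ‖f x‖ₑ ^ 2 ∂μ := by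
  simpa using eLpNorm_nnreal_pow_eq_lintegral (f := f) (μ := μ) (p := 2) two_ne_zero

variable {X ι E : Type*} [Fintype ι] [NormedAddCommGroup E] {f : ι → X → E}

noncomputable def sumSqEnorm (f : ι → X → E) (x : X) : ℝ≥0∞ := ∑ i, ‖f i x‖ₑ ^ 2

theorem eq_zero_of_sumSqEnorm_eq_zero {x : X} (hx : sumSqEnorm f x = 0) (i : ι) : f i x = 0 := by
  simpa using Finset.sum_eq_zero_iff.mp hx i (Finset.mem_univ i)

variable {𝕜 : Type*} [NormedField 𝕜] [NormedSpace 𝕜 E] [MeasurableSpace X] {μ : Measure X}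

theorem aemeasurable_sumSqEnorm (hf : ∀ i, AEStronglyMeasurable (f i) μ) :
    AEMeasurable (sumSqEnorm f) μ :=
  Finset.aemeasurable_fun_sum _ fun i _ => (hf i).enorm.pow_const 2

theorem smul_ae_eq_of_ae_eq_withDensity_sumSqEnorm (hf : ∀ i, AEStronglyMeasurable (f i) μ)
    {a b : X → 𝕜} (hab : a =ᵐ[μ.withDensity (sumSqEnorm f)] b) (i : ι) :
    (fun x => a x • f i x) =ᵐ[μ] fun x => b x • f i x := by
  filter_upwards [(ae_withDensity_iff' (aemeasurable_sumSqEnorm hf)).mp hab] with x hx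
  by_cases hgx : sumSqEnorm f x = 0
  · simp [eq_zero_of_sumSqEnorm_eq_zero hgx i]
  · rw [hx hgx]

theorem AEStronglyMeasurable.smul_of_withDensity_sumSqEnorm
    (hf : ∀ i, AEStronglyMeasurable (f i) μ) {h : X → 𝕜}
    (hh : AEStronglyMeasurable h (μ.withDensity (sumSqEnorm f))) (i : ι) :
    AEStronglyMeasurable (fun x => h x • f i x) μ :=
  (hh.stronglyMeasurable_mk.aestronglyMeasurable.smul (hf i)).congr
    (smul_ae_eq_of_ae_eq_withDensity_sumSqEnorm hf hh.ae_eq_mk.symm i)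

theorem eLpNorm_withDensity_sumSqEnorm_pow_two (hf : ∀ i, AEStronglyMeasurable (f i) μ)
    {h : X → 𝕜} (hh : AEStronglyMeasurable h (μ.withDensity (sumSqEnorm f))) :
    eLpNorm h 2 (μ.withDensity (sumSqEnorm f)) ^ 2 =
      ∑ i, eLpNorm (fun x => h x • f i x) 2 μ ^ 2 := by
  have hpoint : ∀ x, (sumSqEnorm f * fun x => ‖h x‖ₑ ^ 2) x = ∑ i, ‖h x • f i x‖ₑ ^ 2 := by
    intro x
    simp only [Pi.mul_apply, sumSqEnorm, Finset.sum_mul, enorm_smul, mul_pow]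
    exact Finset.sum_congr rfl fun i _ => mul_comm _ _
  simp only [eLpNorm_two_pow_two]
  rw [lintegral_withDensity_eq_lintegral_mul₀' (aemeasurable_sumSqEnorm hf)
    (hh.enorm.pow_const 2), lintegral_congr hpoint, lintegral_finsetSum']
  exact fun i _ => ((hh.smul_of_withDensity_sumSqEnorm hf i).enorm.pow_const 2)

theorem MemLp.smul_of_withDensity_sumSqEnorm (hf : ∀ i, AEStronglyMeasurable (f i) μ)
    {h : X → 𝕜} (hh : MemLp h 2 (μ.withDensity (sumSqEnorm f))) (i : ι) :
    MemLp (fun x => h x • f i x) 2 μ := by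
  refine ⟨hh.1.smul_of_withDensity_sumSqEnorm hf i, ?_⟩
  have hsq : eLpNorm (fun x => h x • f i x) 2 μ ^ 2 < ⊤ :=
    calc eLpNorm (fun x => h x • f i x) 2 μ ^ 2
        ≤ ∑ j, eLpNorm (fun x => h x • f j x) 2 μ ^ 2 :=
          Finset.single_le_sum (f := fun j => eLpNorm (fun x => h x • f j x) 2 μ ^ 2)
            (fun j _ => zero_le) (Finset.mem_univ i)
      _ = eLpNorm h 2 (μ.withDensity (sumSqEnorm f)) ^ 2 :=
          (eLpNorm_withDensity_sumSqEnorm_pow_two hf hh.1).symm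
      _ < ⊤ := ENNReal.pow_lt_top hh.2
  exact (ENNReal.pow_lt_top_iff.mp hsq).resolve_right two_ne_zero

noncomputable def sumSqEnormSmulLp (hf : ∀ i, AEStronglyMeasurable (f i) μ) (i : ι) :
    Lp 𝕜 2 (μ.withDensity (sumSqEnorm f)) →ₗ[𝕜] Lp E 2 μ where
  toFun h := ((Lp.memLp h).smul_of_withDensity_sumSqEnorm hf i).toLp _
  map_add' a b := by
    calc _ = (((Lp.memLp a).smul_of_withDensity_sumSqEnorm hf i).add
          ((Lp.memLp b).smul_of_withDensity_sumSqEnorm hf i)).toLp _ := by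
          refine MemLp.toLp_congr _ _ ?_
          filter_upwards [smul_ae_eq_of_ae_eq_withDensity_sumSqEnorm hf (Lp.coeFn_add a b) i]
            with x hx
          rw [hx, Pi.add_apply, Pi.add_apply, add_smul]
      _ = _ := MemLp.toLp_add _ _
  map_smul' c a := by
    calc _ = (((Lp.memLp a).smul_of_withDensity_sumSqEnorm hf i).const_smul c).toLp _ := by
          refine MemLp.toLp_congr _ _ ?_
          filter_upwards [smul_ae_eq_of_ae_eq_withDensity_sumSqEnorm hf (Lp.coeFn_smul c a) i]
            with x hx
          rw [hx, Pi.smul_apply, Pi.smul_apply, smul_eq_mul, mul_smul]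
      _ = _ := MemLp.toLp_const_smul _ _

theorem sumSqEnormSmulLp_toLp (hf : ∀ i, AEStronglyMeasurable (f i) μ) {h : X → 𝕜}
    (hh : MemLp h 2 (μ.withDensity (sumSqEnorm f))) (i : ι) :
    sumSqEnormSmulLp hf i (hh.toLp h) = (hh.smul_of_withDensity_sumSqEnorm hf i).toLp _ :=
  MemLp.toLp_congr ((Lp.memLp _).smul_of_withDensity_sumSqEnorm hf i) _
    (smul_ae_eq_of_ae_eq_withDensity_sumSqEnorm hf hh.coeFn_toLp i)

theorem norm_sumSqEnormSmulLp (hf : ∀ i, AEStronglyMeasurable (f i) μ)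
    (h : Lp 𝕜 2 (μ.withDensity (sumSqEnorm f))) (i : ι) :
    ‖sumSqEnormSmulLp hf i h‖ = (eLpNorm (fun x => h x • f i x) 2 μ).toReal :=
  Lp.norm_toLp _ ((Lp.memLp h).smul_of_withDensity_sumSqEnorm hf i)

noncomputable def sumSqEnormToPiLp (hf : ∀ i, AEStronglyMeasurable (f i) μ) :
    Lp 𝕜 2 (μ.withDensity (sumSqEnorm f)) →ₗᵢ[𝕜] PiLp 2 (fun _ : ι => Lp E 2 μ) where
  toLinearMap :=
    (WithLp.linearEquiv 2 𝕜 (ι → Lp E 2 μ)).symm.toLinearMap ∘ₗ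
      LinearMap.pi (sumSqEnormSmulLp hf)
  norm_map' h := by
    refine (sq_eq_sq₀ (norm_nonneg _) (norm_nonneg _)).mp ?_
    have hfin : ∀ i ∈ Finset.univ, eLpNorm (fun x => h x • f i x) 2 μ ^ 2 ≠ ⊤ := fun i _ =>
      ENNReal.pow_ne_top ((Lp.memLp h).smul_of_withDensity_sumSqEnorm hf i).2.ne
    calc _ = ∑ i, ‖sumSqEnormSmulLp hf i h‖ ^ 2 := PiLp.norm_sq_eq_of_L2 _ _
      _ = ∑ i, (eLpNorm (fun x => h x • f i x) 2 μ ^ 2).toReal := by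
          simp only [norm_sumSqEnormSmulLp, ENNReal.toReal_pow]
      _ = (∑ i, eLpNorm (fun x => h x • f i x) 2 μ ^ 2).toReal := (ENNReal.toReal_sum hfin).symm
      _ = ‖h‖ ^ 2 := by
          rw [← eLpNorm_withDensity_sumSqEnorm_pow_two hf (Lp.memLp h).1, ENNReal.toReal_pow,
            Lp.norm_def]

theorem sumSqEnormToPiLp_toLp (hf : ∀ i, AEStronglyMeasurable (f i) μ) {h : X → 𝕜}
    (hh : MemLp h 2 (μ.withDensity (sumSqEnorm f))) :
    sumSqEnormToPiLp hf (hh.toLp h) =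
      WithLp.toLp 2 fun i => (hh.smul_of_withDensity_sumSqEnorm hf i).toLp _ := by
  ext i : 1
  exact sumSqEnormSmulLp_toLp hf hh i

end MeasureTheory

theorem stmt3_general {X : Type*} [MeasurableSpace X] (μ : Measure X)
    (n : ℕ) (f : Fin n → X → ℂ) (hf : ∀ i, MemLp (f i) 2 μ) :
    ∃ J : Lp ℂ 2 (μ.withDensity fun x => ∑ i, (‖f i x‖₊ : ℝ≥0∞) ^ 2) →ₗᵢ[ℂ]
        PiLp 2 (fun _ : Fin n => Lp ℂ 2 μ),
      ∀ (φ : X → ℂ), Measurable φ → (∃ C : ℝ, ∀ x, ‖φ x‖ ≤ C) →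
        ∀ (h₁ : MemLp φ 2 (μ.withDensity fun x => ∑ i, (‖f i x‖₊ : ℝ≥0∞) ^ 2))
          (h₂ : ∀ i, MemLp (fun x => φ x * f i x) 2 μ),
          J (h₁.toLp φ) = WithLp.toLp 2 (fun i => (h₂ i).toLp fun x => φ x * f i x) :=
  ⟨sumSqEnormToPiLp fun i => (hf i).1, fun _ _ _ h₁ _ => sumSqEnormToPiLp_toLp _ h₁⟩

/-- Let `(X, 𝔅, μ)` be a finite measure space, `f₁, …, fₙ ∈ L²(μ)`, and
`g = ∑ |fᵢ|²`, `ν = μ·g`. Then there is a complex linear isometry `J : L²(ν) → L²(μ)ⁿ`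
(the `ℓ²`-direct sum) sending the class of any bounded measurable `φ` to `(φ·f₁, …, φ·fₙ)`. -/
theorem stmt3 {X : Type*} [MeasurableSpace X] (μ : Measure X) [IsFiniteMeasure μ]
    (n : ℕ) (f : Fin n → X → ℂ) (hf : ∀ i, MemLp (f i) 2 μ) :
    ∃ J : Lp ℂ 2 (μ.withDensity fun x => ∑ i, (‖f i x‖₊ : ℝ≥0∞) ^ 2) →ₗᵢ[ℂ]
        PiLp 2 (fun _ : Fin n => Lp ℂ 2 μ),
      ∀ (φ : X → ℂ), Measurable φ → (∃ C : ℝ, ∀ x, ‖φ x‖ ≤ C) →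
        ∀ (h₁ : MemLp φ 2 (μ.withDensity fun x => ∑ i, (‖f i x‖₊ : ℝ≥0∞) ^ 2))
          (h₂ : ∀ i, MemLp (fun x => φ x * f i x) 2 μ),
          J (h₁.toLp φ) = WithLp.toLp 2 (fun i => (h₂ i).toLp fun x => φ x * f i x) :=
  stmt3_general μ n f hf
end
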